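/- arXiv:math/0508571 — 4 statements merged into one kernel-verified Lean document; each statement's English description precedes it below -/
import Mathlib

section
/- Let p : ℂ → ℝ be a polynomial and for z ∈ ℂ write A_{jk}(z) = (1/(j!k!)) ∂^{j+k}p/∂z^j ∂z̄^k (z). Fix z ∈ ℂ, τ > 0, and let R_{τp}(z) = inf_{j,k ≥ 0, (j,k)≠(0,0)} |τ A_{jk}(z)|^{-1/(j+k)}. Then there is a constant C depending only on deg p such that for all w with |w−z| < R < R_{τp}(z) and all j,k ≥ 0 with j+k ≥ 1: |τ ∂^{j+k}p/∂z^j∂z̄^k (w)| ≤ C R^{-(j+k)}. -/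
noncomputable def dxd (f : ℂ → ℂ) (z : ℂ) : ℂ := fderiv ℝ f z 1
noncomputable def dyd (f : ℂ → ℂ) (z : ℂ) : ℂ := fderiv ℝ f z Complex.I
/-- Wirtinger derivative `∂/∂z̄`. -/
noncomputable def dzbar (f : ℂ → ℂ) : ℂ → ℂ := fun z => (1/2) * (dxd f z + Complex.I * dyd f z)
/-- Wirtinger derivative `∂/∂z`. -/
noncomputable def dzz (f : ℂ → ℂ) : ℂ → ℂ := fun z => (1/2) * (dxd f z - Complex.I * dyd f z)
/-- The mixed Wirtinger derivative `∂^{j+k}/∂z^j ∂z̄^k`. -/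
noncomputable def wd (j k : ℕ) (f : ℂ → ℂ) : ℂ → ℂ := dzz^[j] (dzbar^[k] f)
/-- The Taylor coefficient `A_{jk}(z) = (1/(j!k!)) ∂^{j+k}p/∂z^j∂z̄^k(z)`. -/
noncomputable def Ajk (p : ℂ → ℝ) (j k : ℕ) (z : ℂ) : ℂ :=
  (1 / ((j.factorial * k.factorial : ℕ) : ℂ)) * wd j k (fun w => (p w : ℂ)) z

open Complex Finset

private lemma mono_hasFDeriv (z : ℂ) (m n : ℕ) (w : ℂ) :
    ∃ L : ℂ →L[ℝ] ℂ,
      HasFDerivAt (fun v => (v - z) ^ m * (starRingEnd ℂ (v - z)) ^ n) L w ∧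
      L 1 = m * (w - z) ^ (m - 1) * (starRingEnd ℂ (w - z)) ^ n
            + n * (w - z) ^ m * (starRingEnd ℂ (w - z)) ^ (n - 1) ∧
      L I = I * (m * (w - z) ^ (m - 1) * (starRingEnd ℂ (w - z)) ^ n)
            - I * (n * (w - z) ^ m * (starRingEnd ℂ (w - z)) ^ (n - 1)) := by
  set u := w - z with hu
  have hpow : HasFDerivAt (fun v : ℂ => (v - z) ^ m)
      (((ContinuousLinearMap.id ℂ ℂ).smulRight ((m : ℂ) * u ^ (m - 1))).restrictScalars ℝ) w := by
    have h1 : HasDerivAt (fun v : ℂ => (v - z) ^ m) ((m : ℂ) * u ^ (m - 1)) w := by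
      simpa [Function.comp_def] using (hasDerivAt_pow m (w - z)).comp w ((hasDerivAt_id w).sub_const z)
    exact h1.hasFDerivAt.restrictScalars ℝ
  have hinner : HasFDerivAt (fun v : ℂ => starRingEnd ℂ (v - z))
      ((Complex.conjCLE : ℂ ≃L[ℝ] ℂ) : ℂ →L[ℝ] ℂ) w := by
    have h := ((Complex.conjCLE : ℂ ≃L[ℝ] ℂ).hasFDerivAt (x := w - z)).comp w
      ((hasFDerivAt_id w).sub_const z)
    simpa [Function.comp_def, ContinuousLinearMap.comp_id] using h
  have hconj : HasFDerivAt (fun v : ℂ => (starRingEnd ℂ (v - z)) ^ n)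
      ((((ContinuousLinearMap.id ℂ ℂ).smulRight ((n : ℂ) * (starRingEnd ℂ u) ^ (n - 1))).restrictScalars ℝ).comp
        ((Complex.conjCLE : ℂ ≃L[ℝ] ℂ) : ℂ →L[ℝ] ℂ)) w := by
    have houter : HasFDerivAt (fun x : ℂ => x ^ n)
        (((ContinuousLinearMap.id ℂ ℂ).smulRight ((n : ℂ) * (starRingEnd ℂ u) ^ (n - 1))).restrictScalars ℝ)
        (starRingEnd ℂ (w - z)) :=
      (hasDerivAt_pow n _).hasFDerivAt.restrictScalars ℝ
    exact houter.comp w hinner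
  have hmul := hpow.mul hconj
  refine ⟨_, hmul, ?_, ?_⟩ <;>
  · simp only [ContinuousLinearMap.add_apply, ContinuousLinearMap.coe_smul',
      Pi.smul_apply, ContinuousLinearMap.coe_comp', Function.comp_apply,
      ContinuousLinearMap.coe_restrictScalars', ContinuousLinearMap.smulRight_apply,
      ContinuousLinearMap.coe_id', id_eq, smul_eq_mul, ContinuousLinearEquiv.coe_coe, Complex.conjCLE_apply,
      map_one, Complex.conj_I, ← map_sub (starRingEnd ℂ)]
    ring

noncomputable def PP (z : ℂ) (N : ℕ) (c : ℕ → ℕ → ℂ) : ℂ → ℂ :=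
  fun v => ∑ j ∈ range N, ∑ k ∈ range N, c j k * ((v - z) ^ j * (starRingEnd ℂ (v - z)) ^ k)

private lemma shift_sum (N : ℕ) (f : ℕ → ℂ) (u : ℂ) (h : f N = 0) :
    ∑ j ∈ range N, f j * ((j : ℂ) * u ^ (j - 1)) =
    ∑ j ∈ range N, ((j : ℂ) + 1) * f (j + 1) * u ^ j := by
  have h1 := Finset.sum_range_succ (fun j => f j * ((j : ℂ) * u ^ (j - 1))) N
  have h2 := Finset.sum_range_succ' (fun j => f j * ((j : ℂ) * u ^ (j - 1))) N
  rw [h1] at h2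
  simp only [h, Nat.cast_zero, zero_mul, mul_zero, add_zero, zero_add] at h2
  rw [h2]
  refine Finset.sum_congr rfl fun j _ => ?_
  simp only [Nat.add_sub_cancel]
  push_cast
  ring

private lemma PP_deriv (z : ℂ) (N : ℕ) (c : ℕ → ℕ → ℂ) (w : ℂ) :
    DifferentiableAt ℝ (PP z N c) w ∧
    dzz (PP z N c) w = ∑ j ∈ range N, ∑ k ∈ range N,
      c j k * ((j : ℂ) * (w - z) ^ (j - 1) * (starRingEnd ℂ (w - z)) ^ k) ∧
    dzbar (PP z N c) w = ∑ j ∈ range N, ∑ k ∈ range N,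
      c j k * ((k : ℂ) * (w - z) ^ j * (starRingEnd ℂ (w - z)) ^ (k - 1)) := by
  choose L hL hL1 hLI using fun m n => mono_hasFDeriv z m n w
  have hD : ∀ j k, DifferentiableAt ℝ
      (fun v => (v - z) ^ j * (starRingEnd ℂ (v - z)) ^ k) w :=
    fun j k => (hL j k).differentiableAt
  have hDc : ∀ j k, DifferentiableAt ℝ
      (fun v => c j k * ((v - z) ^ j * (starRingEnd ℂ (v - z)) ^ k)) w :=
    fun j k => (hD j k).const_mul _
  have hDi : ∀ j ∈ range N, DifferentiableAt ℝ
      (fun v => ∑ k ∈ range N, c j k * ((v - z) ^ j * (starRingEnd ℂ (v - z)) ^ k)) w :=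
    fun j _ => DifferentiableAt.fun_sum fun k _ => hDc j k
  have hdiff : DifferentiableAt ℝ (PP z N c) w := DifferentiableAt.fun_sum hDi
  have hfd : fderiv ℝ (PP z N c) w
      = ∑ j ∈ range N, ∑ k ∈ range N, c j k • L j k := by
    rw [show PP z N c = fun v => ∑ j ∈ range N, ∑ k ∈ range N, c j k * ((v - z) ^ j * (starRingEnd ℂ (v - z)) ^ k) from rfl, fderiv_fun_sum hDi]
    refine Finset.sum_congr rfl fun j _ => ?_
    rw [fderiv_fun_sum fun k _ => hDc j k]
    refine Finset.sum_congr rfl fun k _ => ?_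
    rw [fderiv_const_mul (hD j k), (hL j k).fderiv]
  have happ : ∀ x : ℂ, fderiv ℝ (PP z N c) w x
      = ∑ j ∈ range N, ∑ k ∈ range N, c j k * L j k x := by
    intro x
    rw [hfd]
    simp [ContinuousLinearMap.sum_apply, smul_eq_mul]
  refine ⟨hdiff, ?_, ?_⟩ <;>
  · simp only [dzz, dzbar, dxd, dyd, happ 1, happ I, Finset.mul_sum, ← Finset.sum_sub_distrib,
      ← Finset.sum_add_distrib]
    refine Finset.sum_congr rfl fun j _ => Finset.sum_congr rfl fun k _ => ?_
    rw [hL1 j k, hLI j k]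
    ring_nf
    simp [Complex.I_sq]
    ring

private lemma PP_congr (z : ℂ) (N : ℕ) (c c' : ℕ → ℕ → ℂ) (h : ∀ j k, c j k = c' j k) :
    PP z N c = PP z N c' := by
  rw [show c = c' from funext fun j => funext fun k => h j k]

private lemma dzz_PP (z : ℂ) (N : ℕ) (c : ℕ → ℕ → ℂ) (hc : ∀ k, c N k = 0) :
    dzz (PP z N c) = PP z N (fun j k => ((j : ℂ) + 1) * c (j + 1) k) := by
  funext w
  obtain ⟨-, h1, -⟩ := PP_deriv z N c w
  rw [h1]
  calc ∑ j ∈ range N, ∑ k ∈ range N,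
        c j k * ((j : ℂ) * (w - z) ^ (j - 1) * (starRingEnd ℂ (w - z)) ^ k)
      = ∑ k ∈ range N, ∑ j ∈ range N,
        c j k * ((j : ℂ) * (w - z) ^ (j - 1) * (starRingEnd ℂ (w - z)) ^ k) := Finset.sum_comm
    _ = ∑ k ∈ range N, ∑ j ∈ range N, (((j : ℂ) + 1) * c (j + 1) k) *
        ((w - z) ^ j * (starRingEnd ℂ (w - z)) ^ k) := by
        refine Finset.sum_congr rfl fun k _ => ?_
        calc ∑ j ∈ range N, c j k * ((j : ℂ) * (w - z) ^ (j - 1) * (starRingEnd ℂ (w - z)) ^ k)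
            = ∑ j ∈ range N, (c j k * (starRingEnd ℂ (w - z)) ^ k) * ((j : ℂ) * (w - z) ^ (j - 1)) :=
              Finset.sum_congr rfl fun j _ => by ring
          _ = ∑ j ∈ range N, ((j : ℂ) + 1) * (c (j + 1) k * (starRingEnd ℂ (w - z)) ^ k) * (w - z) ^ j :=
              shift_sum N _ _ (by simp [hc k])
          _ = _ := Finset.sum_congr rfl fun j _ => by ring
    _ = ∑ j ∈ range N, ∑ k ∈ range N, (((j : ℂ) + 1) * c (j + 1) k) *
        ((w - z) ^ j * (starRingEnd ℂ (w - z)) ^ k) := Finset.sum_comm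

private lemma dzbar_PP (z : ℂ) (N : ℕ) (c : ℕ → ℕ → ℂ) (hc : ∀ j, c j N = 0) :
    dzbar (PP z N c) = PP z N (fun j k => ((k : ℂ) + 1) * c j (k + 1)) := by
  funext w
  obtain ⟨-, -, h1⟩ := PP_deriv z N c w
  rw [h1]
  rw [show PP z N (fun j k => ((k : ℂ) + 1) * c j (k + 1)) w
      = ∑ j ∈ range N, ∑ k ∈ range N, (((k : ℂ) + 1) * c j (k + 1)) *
        ((w - z) ^ j * (starRingEnd ℂ (w - z)) ^ k) from rfl]
  refine Finset.sum_congr rfl fun j _ => ?_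
  calc ∑ k ∈ range N, c j k * ((k : ℂ) * (w - z) ^ j * (starRingEnd ℂ (w - z)) ^ (k - 1))
      = ∑ k ∈ range N, (c j k * (w - z) ^ j) * ((k : ℂ) * (starRingEnd ℂ (w - z)) ^ (k - 1)) :=
        Finset.sum_congr rfl fun k _ => by ring
    _ = ∑ k ∈ range N, ((k : ℂ) + 1) * (c j (k + 1) * (w - z) ^ j) * (starRingEnd ℂ (w - z)) ^ k :=
        shift_sum N _ _ (by simp [hc j])
    _ = _ := Finset.sum_congr rfl fun k _ => by ring

def Supp (N : ℕ) (c : ℕ → ℕ → ℂ) : Prop := ∀ j k, N ≤ j ∨ N ≤ k → c j k = 0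

private lemma dzbar_iter (z : ℂ) (N : ℕ) (k : ℕ) :
    ∀ c : ℕ → ℕ → ℂ, Supp N c →
    dzbar^[k] (PP z N c) = PP z N (fun j' k' => (((k' + k).descFactorial k : ℕ) : ℂ) * c j' (k' + k)) := by
  induction k with
  | zero => intro c hc; simp [PP]
  | succ k ih =>
    intro c hc
    rw [Function.iterate_succ_apply, dzbar_PP z N c (fun j => hc j N (Or.inr le_rfl))]
    rw [ih _ (fun j' k' h => by
      rcases h with h | h
      · simp [hc j' (k'+1) (Or.inl h)]
      · simp [hc j' (k'+1) (Or.inr (le_trans h (Nat.le_succ _)))])]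
    refine PP_congr z N _ _ fun j' k' => ?_
    rw [show k' + (k + 1) = (k' + k) + 1 by ring, Nat.succ_descFactorial_succ]
    push_cast
    ring

private lemma dzz_iter (z : ℂ) (N : ℕ) (j : ℕ) :
    ∀ c : ℕ → ℕ → ℂ, Supp N c →
    dzz^[j] (PP z N c) = PP z N (fun j' k' => (((j' + j).descFactorial j : ℕ) : ℂ) * c (j' + j) k') := by
  induction j with
  | zero => intro c hc; simp [PP]
  | succ j ih =>
    intro c hc
    rw [Function.iterate_succ_apply, dzz_PP z N c (fun k => hc N k (Or.inl le_rfl))]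
    rw [ih _ (fun j' k' h => by
      rcases h with h | h
      · simp [hc (j'+1) k' (Or.inl (le_trans h (Nat.le_succ _)))]
      · simp [hc (j'+1) k' (Or.inr h)])]
    refine PP_congr z N _ _ fun j' k' => ?_
    rw [show j' + (j + 1) = (j' + j) + 1 by ring, Nat.succ_descFactorial_succ]
    push_cast
    ring

lemma wd_PP (z : ℂ) (N : ℕ) (j k : ℕ) (c : ℕ → ℕ → ℂ) (hc : Supp N c) :
    wd j k (PP z N c) = PP z N (fun j' k' =>
      (((j' + j).descFactorial j : ℕ) : ℂ) * (((k' + k).descFactorial k : ℕ) : ℂ) * c (j' + j) (k' + k)) := by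
  rw [wd, dzbar_iter z N k c hc, dzz_iter z N j _ (fun j' k' h => by
    rcases h with h | h
    · simp [hc j' (k'+k) (Or.inl h)]
    · simp [hc j' (k'+k) (Or.inr (le_trans h (Nat.le_add_right _ _)))])]
  exact PP_congr z N _ _ fun j' k' => by ring

private lemma one_var (N j : ℕ) (hj : j < N) (x y : ℂ) :
    ∑ r ∈ range N, (if r ≤ j then x ^ r * y ^ (j - r) * (j.choose r : ℂ) else 0) = (x + y) ^ j := by
  rw [add_pow]
  symm
  rw [← Finset.sum_subset (Finset.range_subset_range.2 hj)
    (fun r _ hr => by rw [if_neg]; simpa [Nat.lt_succ_iff] using fun h => hr (Finset.mem_range.2 (Nat.lt_succ_of_le h)))]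
  exact Finset.sum_congr rfl fun r hr => by rw [if_pos (Nat.lt_succ_iff.1 (Finset.mem_range.1 hr))]

private lemma sum4_comm (A B C D : Finset ℕ) (f : ℕ → ℕ → ℕ → ℕ → ℂ) :
    ∑ j ∈ A, ∑ k ∈ B, ∑ r ∈ C, ∑ s ∈ D, f j k r s
      = ∑ r ∈ C, ∑ s ∈ D, ∑ j ∈ A, ∑ k ∈ B, f j k r s := by
  calc ∑ j ∈ A, ∑ k ∈ B, ∑ r ∈ C, ∑ s ∈ D, f j k r s
      = ∑ j ∈ A, ∑ r ∈ C, ∑ k ∈ B, ∑ s ∈ D, f j k r s :=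
        Finset.sum_congr rfl fun j _ => Finset.sum_comm
    _ = ∑ r ∈ C, ∑ j ∈ A, ∑ k ∈ B, ∑ s ∈ D, f j k r s := Finset.sum_comm
    _ = ∑ r ∈ C, ∑ j ∈ A, ∑ s ∈ D, ∑ k ∈ B, f j k r s :=
        Finset.sum_congr rfl fun r _ => Finset.sum_congr rfl fun j _ => Finset.sum_comm
    _ = ∑ r ∈ C, ∑ s ∈ D, ∑ j ∈ A, ∑ k ∈ B, f j k r s :=
        Finset.sum_congr rfl fun r _ => Finset.sum_comm

private lemma expand (N : ℕ) (a : ℕ → ℕ → ℂ) (z : ℂ) :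
    ∃ b : ℕ → ℕ → ℂ, (∀ j k, N ≤ j ∨ N ≤ k → b j k = 0) ∧
      ∀ w : ℂ, (∑ j ∈ range N, ∑ k ∈ range N, a j k * w ^ j * (starRingEnd ℂ w) ^ k) =
         ∑ j ∈ range N, ∑ k ∈ range N, b j k * ((w - z) ^ j * (starRingEnd ℂ (w - z)) ^ k) := by
  classical
  refine ⟨fun r s => ∑ j ∈ range N, ∑ k ∈ range N,
    (if r ≤ j ∧ s ≤ k then a j k * (j.choose r : ℂ) * (k.choose s : ℂ) * z ^ (j - r)
      * (starRingEnd ℂ z) ^ (k - s) else 0), ?_, ?_⟩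
  · intro r s h
    refine Finset.sum_eq_zero fun j hj => Finset.sum_eq_zero fun k hk => ?_
    rw [if_neg]
    have h1 := Finset.mem_range.1 hj
    have h2 := Finset.mem_range.1 hk
    rcases h with h | h <;> omega
  · intro w
    set u := w - z with hu
    have hw : w = u + z := by rw [hu]; ring
    have hcw : starRingEnd ℂ w = starRingEnd ℂ u + starRingEnd ℂ z := by
      rw [hu, map_sub]; ring
    -- RHS with b unfolded
    have key : ∀ j ∈ range N, ∀ k ∈ range N,
        a j k * w ^ j * (starRingEnd ℂ w) ^ k =
        ∑ r ∈ range N, ∑ s ∈ range N,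
          (if r ≤ j ∧ s ≤ k then a j k * (j.choose r : ℂ) * (k.choose s : ℂ) * z ^ (j - r)
            * (starRingEnd ℂ z) ^ (k - s) else 0) * (u ^ r * (starRingEnd ℂ u) ^ s) := by
      intro j hj k hk
      have h1 : ∀ r s : ℕ,
          (if r ≤ j ∧ s ≤ k then a j k * (j.choose r : ℂ) * (k.choose s : ℂ) * z ^ (j - r)
            * (starRingEnd ℂ z) ^ (k - s) else 0) * (u ^ r * (starRingEnd ℂ u) ^ s)
          = a j k * ((if r ≤ j then u ^ r * z ^ (j - r) * (j.choose r : ℂ) else 0)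
              * (if s ≤ k then (starRingEnd ℂ u) ^ s * (starRingEnd ℂ z) ^ (k - s) * (k.choose s : ℂ) else 0)) := by
        intro r s
        by_cases h1 : r ≤ j <;> by_cases h2 : s ≤ k <;> simp [h1, h2] <;> ring
      simp only [h1]
      simp only [← Finset.mul_sum]
      rw [← Finset.sum_mul]
      rw [one_var N j (Finset.mem_range.1 hj), one_var N k (Finset.mem_range.1 hk), ← hw, ← hcw]
      ring
    calc ∑ j ∈ range N, ∑ k ∈ range N, a j k * w ^ j * (starRingEnd ℂ w) ^ k
        = ∑ j ∈ range N, ∑ k ∈ range N, ∑ r ∈ range N, ∑ s ∈ range N,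
          (if r ≤ j ∧ s ≤ k then a j k * (j.choose r : ℂ) * (k.choose s : ℂ) * z ^ (j - r)
            * (starRingEnd ℂ z) ^ (k - s) else 0) * (u ^ r * (starRingEnd ℂ u) ^ s) :=
          Finset.sum_congr rfl fun j hj => Finset.sum_congr rfl fun k hk => key j hj k hk
      _ = ∑ r ∈ range N, ∑ s ∈ range N, (∑ j ∈ range N, ∑ k ∈ range N,
          (if r ≤ j ∧ s ≤ k then a j k * (j.choose r : ℂ) * (k.choose s : ℂ) * z ^ (j - r)
            * (starRingEnd ℂ z) ^ (k - s) else 0)) * (u ^ r * (starRingEnd ℂ u) ^ s) := by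
          simp only [Finset.sum_mul]
          exact sum4_comm _ _ _ _ _
      _ = _ := rfl

private lemma PP_at_base (z : ℂ) (N : ℕ) (hN : 0 < N) (c : ℕ → ℕ → ℂ) :
    PP z N c z = c 0 0 := by
  simp only [PP, sub_self, map_zero]
  simp [zero_pow_eq, mul_ite, Finset.mem_range, hN]

private lemma PP_norm_le (z : ℂ) (N : ℕ) (c : ℕ → ℕ → ℂ) (v : ℂ) :
    ‖PP z N c v‖ ≤ ∑ j ∈ range N, ∑ k ∈ range N, ‖c j k‖ * ‖v - z‖ ^ (j + k) := by
  refine (norm_sum_le _ _).trans (Finset.sum_le_sum fun j _ =>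
    (norm_sum_le _ _).trans (Finset.sum_le_sum fun k _ => le_of_eq ?_))
  have hcn : ‖(starRingEnd ℂ) (v - z)‖ = ‖v - z‖ := RCLike.norm_conj _
  rw [norm_mul, norm_mul, norm_pow, norm_pow, hcn, pow_add]

private lemma myDF_le (n k : ℕ) : n.descFactorial k ≤ n.factorial := by
  rcases le_or_gt k n with h | h
  · calc n.descFactorial k ≤ (n - k).factorial * n.descFactorial k :=
        Nat.le_mul_of_pos_left _ (Nat.factorial_pos _)
    _ = n.factorial := Nat.factorial_mul_descFactorial h
  · rw [Nat.descFactorial_eq_zero_iff_lt.2 h]; exact Nat.zero_le _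

/-- If `p` is a polynomial of degree at most `d`, `τ > 0`, and
`R < R_{τp}(z) = inf_{(j,k)≠(0,0)} |τ A_{jk}(z)|^{-1/(j+k)}` (equivalently
`R^{j+k} |τ A_{jk}(z)| < 1` for all `(j,k) ≠ (0,0)`), then for all `w` with `|w−z| < R`
and all `j + k ≥ 1`, `|τ ∂^{j+k}p/∂z^j∂z̄^k(w)| ≤ C R^{-(j+k)}`, with `C` depending only
on `d`. -/
theorem stmt7 (d : ℕ) : ∃ C > 0, ∀ (p : ℂ → ℝ) (a : ℕ → ℕ → ℂ),
    (∀ w : ℂ, ((p w : ℂ)) = ∑ j ∈ Finset.range (d+1), ∑ k ∈ Finset.range (d+1),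
        a j k * w ^ j * (starRingEnd ℂ w) ^ k) →
    ∀ (τ R : ℝ) (z w : ℂ), 0 < τ → 0 < R →
    (∀ j k : ℕ, ¬(j = 0 ∧ k = 0) → R ^ (j + k) * (τ * ‖Ajk p j k z‖) < 1) →
    ‖w - z‖ < R →
    ∀ j k : ℕ, 1 ≤ j + k →
      τ * ‖wd j k (fun v => (p v : ℂ)) w‖ ≤ C / R ^ (j + k) := by
  refine ⟨((d+1)^2 : ℝ) * ((d.factorial : ℝ))^2, by positivity, ?_⟩
  intro p a hp τ R z w hτ hR hA hw j k hjk
  set N := d + 1 with hN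
  obtain ⟨b, hb, hbe⟩ := expand N a z
  have hpe : (fun v => (p v : ℂ)) = PP z N b := funext fun v => by
    rw [hp v]; exact hbe v
  -- the coefficient after differentiation
  set E : ℕ → ℕ → ℕ → ℕ → ℂ := fun J K j' k' =>
    (((j' + J).descFactorial J : ℕ) : ℂ) * (((k' + K).descFactorial K : ℕ) : ℂ)
      * b (j' + J) (k' + K) with hE
  have hwd : ∀ J K : ℕ, wd J K (fun v => (p v : ℂ)) = PP z N (E J K) := by
    intro J K; rw [hpe, wd_PP z N J K b hb]
  -- identify Ajk with b
  have hAb : ∀ J K : ℕ, Ajk p J K z = b J K := by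
    intro J K
    have hfac : ((J.factorial * K.factorial : ℕ) : ℂ) ≠ 0 := by
      exact_mod_cast Nat.mul_ne_zero (Nat.factorial_ne_zero J) (Nat.factorial_ne_zero K)
    rw [Ajk, hwd J K, PP_at_base z N (Nat.succ_pos d), hE]
    simp only [Nat.zero_add, Nat.descFactorial_self]
    rw [one_div, inv_mul_eq_div, div_eq_iff hfac]
    push_cast
    ring
  -- per-term bound
  have hterm : ∀ j' k' : ℕ, ‖E j k j' k'‖ * ‖w - z‖ ^ (j' + k') * τ ≤
      ((d.factorial : ℝ))^2 / R ^ (j + k) := by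
    intro j' k'
    by_cases hb0 : b (j' + j) (k' + k) = 0
    · rw [hE]
      simp only [hb0, mul_zero, norm_zero, zero_mul]
      positivity
    · have hJd : j' + j ≤ d := by
        by_contra h
        exact hb0 (hb _ _ (Or.inl (by omega)))
      have hKd : k' + k ≤ d := by
        by_contra h
        exact hb0 (hb _ _ (Or.inr (by omega)))
      have hne : ¬(j' + j = 0 ∧ k' + k = 0) := by omega
      have hbb := hA (j' + j) (k' + k) hne
      rw [hAb] at hbb
      have hRp : (0:ℝ) < R ^ ((j' + j) + (k' + k)) := by positivity
      have hb_le : τ * ‖b (j' + j) (k' + k)‖ ≤ 1 / R ^ ((j' + j) + (k' + k)) := by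
        rw [le_div_iff₀ hRp]
        nlinarith [hbb]
      have hdf1 : (((j' + j).descFactorial j : ℕ) : ℝ) ≤ (d.factorial : ℝ) := by
        exact_mod_cast le_trans (myDF_le _ _) (Nat.factorial_le hJd)
      have hdf2 : (((k' + k).descFactorial k : ℕ) : ℝ) ≤ (d.factorial : ℝ) := by
        exact_mod_cast le_trans (myDF_le _ _) (Nat.factorial_le hKd)
      have hwzR : ‖w - z‖ ^ (j' + k') ≤ R ^ (j' + k') :=
        pow_le_pow_left₀ (norm_nonneg _) (le_of_lt hw) _
      have hEnorm : ‖E j k j' k'‖ = (((j' + j).descFactorial j : ℕ) : ℝ)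
          * (((k' + k).descFactorial k : ℕ) : ℝ) * ‖b (j' + j) (k' + k)‖ := by
        rw [hE]; simp [norm_mul]
      rw [hEnorm]
      have key : ‖b (j' + j) (k' + k)‖ * ‖w - z‖ ^ (j' + k') * τ ≤ 1 / R ^ (j + k) := by
        have hsplit : R ^ ((j' + j) + (k' + k)) = R ^ (j' + k') * R ^ (j + k) := by
          rw [← pow_add]; ring_nf
        have h1 : τ * ‖b (j' + j) (k' + k)‖ * ‖w - z‖ ^ (j' + k')
            ≤ (1 / R ^ ((j' + j) + (k' + k))) * R ^ (j' + k') := by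
          apply mul_le_mul hb_le hwzR (by positivity)
          positivity
        calc ‖b (j' + j) (k' + k)‖ * ‖w - z‖ ^ (j' + k') * τ
            = τ * ‖b (j' + j) (k' + k)‖ * ‖w - z‖ ^ (j' + k') := by ring
          _ ≤ (1 / R ^ ((j' + j) + (k' + k))) * R ^ (j' + k') := h1
          _ = 1 / R ^ (j + k) := by
              rw [hsplit]
              field_simp
      calc (((j' + j).descFactorial j : ℕ) : ℝ) * (((k' + k).descFactorial k : ℕ) : ℝ)
            * ‖b (j' + j) (k' + k)‖ * ‖w - z‖ ^ (j' + k') * τ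
          = ((((j' + j).descFactorial j : ℕ) : ℝ) * (((k' + k).descFactorial k : ℕ) : ℝ))
            * (‖b (j' + j) (k' + k)‖ * ‖w - z‖ ^ (j' + k') * τ) := by ring
        _ ≤ ((d.factorial : ℝ) * (d.factorial : ℝ)) * (1 / R ^ (j + k)) := by
            apply mul_le_mul _ key (by positivity) (by positivity)
            exact mul_le_mul hdf1 hdf2 (by positivity) (by positivity)
        _ = ((d.factorial : ℝ))^2 / R ^ (j + k) := by ring
  -- assemble
  rw [hwd j k]
  have h1 : τ * ‖PP z N (E j k) w‖ ≤
      ∑ j' ∈ range N, ∑ k' ∈ range N, ‖E j k j' k'‖ * ‖w - z‖ ^ (j' + k') * τ := by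
    rw [mul_comm]
    calc ‖PP z N (E j k) w‖ * τ
        ≤ (∑ j' ∈ range N, ∑ k' ∈ range N, ‖E j k j' k'‖ * ‖w - z‖ ^ (j' + k')) * τ :=
          mul_le_mul_of_nonneg_right (PP_norm_le z N (E j k) w) (le_of_lt hτ)
      _ = _ := by
            rw [Finset.sum_mul]
            refine Finset.sum_congr rfl fun j' _ => ?_
            rw [Finset.sum_mul]
  refine h1.trans ?_
  calc ∑ j' ∈ range N, ∑ k' ∈ range N, ‖E j k j' k'‖ * ‖w - z‖ ^ (j' + k') * τ
      ≤ ∑ j' ∈ range N, ∑ k' ∈ range N, ((d.factorial : ℝ))^2 / R ^ (j + k) :=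
        Finset.sum_le_sum fun j' _ => Finset.sum_le_sum fun k' _ => hterm j' k'
    _ = (N : ℝ) * ((N : ℝ) * (((d.factorial : ℝ))^2 / R ^ (j + k))) := by
        simp [Finset.sum_const, Finset.card_range, nsmul_eq_mul]
    _ = ((d+1)^2 : ℝ) * ((d.factorial : ℝ))^2 / R ^ (j + k) := by
        rw [hN]; push_cast; ring
end

section
/- Let Λ(z,δ) = Σ_{j,k ≥ 1} |A_{jk}(z)| δ^{j+k} and μ(z,δ) = inf_{j,k ≥ 1} |δ / A_{jk}(z)|^{1/(j+k)}, where A_{jk}(z) = (1/(j!k!)) ∂^{j+k}p/∂z^j∂z̄^k(z) for a subharmonic nonharmonic polynomial p. Then μ(z,·) is an approximate inverse of Λ(z,·): there are constants c, C > 0 depending only on deg p such that for all δ > 0 and all z with some A_{jk}(z) ≠ 0, c δ ≤ Λ(z, μ(z,δ)) ≤ C δ and c δ ≤ μ(z, Λ(z,δ)) ≤ C δ. -/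
/-- `Λ(z,δ) = Σ_{j,k ≥ 1} |A_{jk}(z)| δ^{j+k}` (the sum is finite for a polynomial of
degree at most `d`). -/
noncomputable def Lam (p : ℂ → ℝ) (d : ℕ) (z : ℂ) (δ : ℝ) : ℝ :=
  ∑ j ∈ Finset.Icc 1 d, ∑ k ∈ Finset.Icc 1 d, ‖Ajk p j k z‖ * δ ^ (j + k)

/-- `μ(z,δ) = inf_{j,k ≥ 1} |δ / A_{jk}(z)|^{1/(j+k)}`. -/
noncomputable def muf (p : ℂ → ℝ) (z : ℂ) (δ : ℝ) : ℝ :=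
  sInf {x : ℝ | ∃ j k : ℕ, 1 ≤ j ∧ 1 ≤ k ∧ Ajk p j k z ≠ 0 ∧
    x = (δ / ‖Ajk p j k z‖) ^ ((1:ℝ) / ((j : ℝ) + (k : ℝ)))}

noncomputable def lapR (p : ℂ → ℝ) (z : ℂ) : ℝ :=
  fderiv ℝ (fun w => fderiv ℝ p w 1) z 1 + fderiv ℝ (fun w => fderiv ℝ p w Complex.I) z Complex.I


lemma mono_fderiv (c : ℂ) (m n : ℕ) (z : ℂ) :
    ∃ L : ℂ →L[ℝ] ℂ, HasFDerivAt (fun w : ℂ => c * w ^ m * (starRingEnd ℂ w) ^ n) L z ∧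
      ∀ v, L v = c * ((m : ℂ) * z ^ (m-1) * v) * (starRingEnd ℂ z) ^ n
            + c * z ^ m * ((n : ℂ) * (starRingEnd ℂ z) ^ (n-1) * (starRingEnd ℂ v)) := by
  have hconj : HasFDerivAt (fun w : ℂ => starRingEnd ℂ w)
      (Complex.conjCLE : ℂ ≃L[ℝ] ℂ).toContinuousLinearMap z :=
    Complex.conjCLE.hasFDerivAt
  have h1 : HasFDerivAt (fun w : ℂ => c * w ^ m) _ z :=
    ((hasDerivAt_pow m z).hasFDerivAt.restrictScalars ℝ).const_mul c
  have h2 : HasFDerivAt (fun w : ℂ => (starRingEnd ℂ w) ^ n) _ z :=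
    HasFDerivAt.comp z ((hasDerivAt_pow n (starRingEnd ℂ z)).hasFDerivAt.restrictScalars ℝ) hconj
  refine ⟨_, h1.mul h2, fun v => ?_⟩
  simp [ContinuousLinearMap.smul_apply, ContinuousLinearMap.comp_apply,
    ContinuousLinearMap.smulRight_apply, smul_eq_mul, Complex.conjCLE_apply]
  ring

lemma sum_fderiv {ι : Type*} (s : Finset ι) (c : ι → ℂ) (m n : ι → ℕ) (z : ℂ) :
    ∃ L : ℂ →L[ℝ] ℂ,
      HasFDerivAt (fun w : ℂ => ∑ i ∈ s, c i * w ^ m i * (starRingEnd ℂ w) ^ n i) L z ∧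
      ∀ v, L v = ∑ i ∈ s, (c i * ((m i : ℂ) * z ^ (m i - 1) * v) * (starRingEnd ℂ z) ^ n i
            + c i * z ^ m i * ((n i : ℂ) * (starRingEnd ℂ z) ^ (n i - 1) * (starRingEnd ℂ v))) := by
  choose L hL hv using fun i => mono_fderiv (c i) (m i) (n i) z
  refine ⟨∑ i ∈ s, L i, HasFDerivAt.fun_sum (fun i _ => hL i), fun v => ?_⟩
  simp [hv]

lemma dzbar_sum {ι : Type*} (s : Finset ι) (c : ι → ℂ) (m n : ι → ℕ) :
    dzbar (fun w : ℂ => ∑ i ∈ s, c i * w ^ m i * (starRingEnd ℂ w) ^ n i) =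
      fun z => ∑ i ∈ s, (c i * (n i : ℂ)) * z ^ m i * (starRingEnd ℂ z) ^ (n i - 1) := by
  funext z
  obtain ⟨L, hL, hv⟩ := sum_fderiv s c m n z
  simp only [dzbar, dxd, dyd, hL.fderiv, hv, map_one, Complex.conj_I, Finset.mul_sum,
    ← Finset.sum_add_distrib]
  refine Finset.sum_congr rfl fun i _ => ?_
  ring_nf
  rw [Complex.I_sq]
  ring

lemma dzz_sum {ι : Type*} (s : Finset ι) (c : ι → ℂ) (m n : ι → ℕ) :
    dzz (fun w : ℂ => ∑ i ∈ s, c i * w ^ m i * (starRingEnd ℂ w) ^ n i) =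
      fun z => ∑ i ∈ s, (c i * (m i : ℂ)) * z ^ (m i - 1) * (starRingEnd ℂ z) ^ n i := by
  funext z
  obtain ⟨L, hL, hv⟩ := sum_fderiv s c m n z
  simp only [dzz, dxd, dyd, hL.fderiv, hv, map_one, Complex.conj_I, Finset.mul_sum,
    ← Finset.sum_sub_distrib]
  refine Finset.sum_congr rfl fun i _ => ?_
  ring_nf
  rw [Complex.I_sq]
  ring

lemma dzbar_iter_sum {ι : Type*} (s : Finset ι) (c : ι → ℂ) (m n : ι → ℕ) (K : ℕ) :
    dzbar^[K] (fun w : ℂ => ∑ i ∈ s, c i * w ^ m i * (starRingEnd ℂ w) ^ n i) =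
      fun z => ∑ i ∈ s, (c i * ((n i).descFactorial K : ℂ)) * z ^ m i
        * (starRingEnd ℂ z) ^ (n i - K) := by
  induction K with
  | zero => simp
  | succ K ih =>
      rw [Function.iterate_succ_apply', ih]
      rw [dzbar_sum s (fun i => c i * ((n i).descFactorial K : ℂ)) m (fun i => n i - K)]
      funext z
      refine Finset.sum_congr rfl fun i _ => ?_
      have : ((n i).descFactorial (K+1) : ℂ) = ((n i).descFactorial K : ℂ) * ((n i - K : ℕ) : ℂ) := by
        rw [Nat.descFactorial_succ]; push_cast; ring
      rw [this, Nat.sub_sub]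
      try ring

lemma dzz_iter_sum {ι : Type*} (s : Finset ι) (c : ι → ℂ) (m n : ι → ℕ) (J : ℕ) :
    dzz^[J] (fun w : ℂ => ∑ i ∈ s, c i * w ^ m i * (starRingEnd ℂ w) ^ n i) =
      fun z => ∑ i ∈ s, (c i * ((m i).descFactorial J : ℂ)) * z ^ (m i - J)
        * (starRingEnd ℂ z) ^ n i := by
  induction J with
  | zero => simp
  | succ J ih =>
      rw [Function.iterate_succ_apply', ih]
      rw [dzz_sum s (fun i => c i * ((m i).descFactorial J : ℂ)) (fun i => m i - J) n]
      funext z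
      refine Finset.sum_congr rfl fun i _ => ?_
      have : ((m i).descFactorial (J+1) : ℂ) = ((m i).descFactorial J : ℂ) * ((m i - J : ℕ) : ℂ) := by
        rw [Nat.descFactorial_succ]; push_cast; ring
      rw [this, Nat.sub_sub]
      try ring

lemma wd_sum {ι : Type*} (s : Finset ι) (c : ι → ℂ) (m n : ι → ℕ) (j k : ℕ) :
    wd j k (fun w : ℂ => ∑ i ∈ s, c i * w ^ m i * (starRingEnd ℂ w) ^ n i) =
      fun z => ∑ i ∈ s, (c i * ((n i).descFactorial k : ℂ) * ((m i).descFactorial j : ℂ))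
        * z ^ (m i - j) * (starRingEnd ℂ z) ^ (n i - k) := by
  rw [wd, dzbar_iter_sum, dzz_iter_sum]

theorem stmt8' (d : ℕ) :
    ∀ (p : ℂ → ℝ) (a : ℕ → ℕ → ℂ),
    (∀ w : ℂ, ((p w : ℂ)) = ∑ j ∈ Finset.range (d+1), ∑ k ∈ Finset.range (d+1),
        a j k * w ^ j * (starRingEnd ℂ w) ^ k) →
    ∀ z : ℂ, (∃ j k : ℕ, 1 ≤ j ∧ 1 ≤ k ∧ Ajk p j k z ≠ 0) →
    ∀ δ : ℝ, 0 < δ →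
      (1 * δ ≤ Lam p d z (muf p z δ) ∧ Lam p d z (muf p z δ) ≤ ((d:ℝ)+1)^2 * δ) ∧
      (1 * δ ≤ muf p z (Lam p d z δ) ∧ muf p z (Lam p d z δ) ≤ ((d:ℝ)+1)^2 * δ) := by
  intro p a hp z hne δ hδ
  -- p as a family sum
  have hpf : (fun w : ℂ => ((p w : ℂ))) =
      fun w : ℂ => ∑ i ∈ (Finset.range (d+1)) ×ˢ (Finset.range (d+1)),
        a i.1 i.2 * w ^ i.1 * (starRingEnd ℂ w) ^ i.2 :=
    funext fun w => by rw [hp w, Finset.sum_product]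
  -- vanishing of high coefficients
  have hvan : ∀ j k : ℕ, (d < j ∨ d < k) → Ajk p j k z = 0 := by
    intro j k h
    rw [Ajk, hpf, wd_sum]
    rw [mul_eq_zero]; right
    apply Finset.sum_eq_zero
    intro i hi
    rw [Finset.mem_product, Finset.mem_range, Finset.mem_range] at hi
    rcases h with h | h
    · have : (i.1).descFactorial j = 0 :=
        Nat.descFactorial_eq_zero_iff_lt.mpr (lt_of_le_of_lt (Nat.lt_succ_iff.mp hi.1) h)
      simp [this]
    · have : (i.2).descFactorial k = 0 :=
        Nat.descFactorial_eq_zero_iff_lt.mpr (lt_of_le_of_lt (Nat.lt_succ_iff.mp hi.2) h)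
      simp [this]
  set b : ℕ × ℕ → ℝ := fun i => ‖Ajk p i.1 i.2 z‖ with hbdef
  set P : Finset (ℕ × ℕ) := (Finset.Icc 1 d) ×ˢ (Finset.Icc 1 d) with hPdef
  set T : Finset (ℕ × ℕ) := P.filter (fun i => Ajk p i.1 i.2 z ≠ 0) with hTdef
  have hTsub : T ⊆ P := Finset.filter_subset _ _
  have hTmem : ∀ i ∈ T, 1 ≤ i.1 ∧ i.1 ≤ d ∧ 1 ≤ i.2 ∧ i.2 ≤ d ∧ Ajk p i.1 i.2 z ≠ 0 := by
    intro i hi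
    rw [hTdef, Finset.mem_filter, hPdef, Finset.mem_product, Finset.mem_Icc, Finset.mem_Icc] at hi
    exact ⟨hi.1.1.1, hi.1.1.2, hi.1.2.1, hi.1.2.2, hi.2⟩
  have hTne : T.Nonempty := by
    obtain ⟨j, k, hj, hk, hA⟩ := hne
    have hjd : j ≤ d := by by_contra h; exact hA (hvan j k (Or.inl (not_le.mp h)))
    have hkd : k ≤ d := by by_contra h; exact hA (hvan j k (Or.inr (not_le.mp h)))
    exact ⟨(j, k), by
      rw [hTdef, Finset.mem_filter, hPdef, Finset.mem_product, Finset.mem_Icc, Finset.mem_Icc]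
      exact ⟨⟨⟨hj, hjd⟩, ⟨hk, hkd⟩⟩, hA⟩⟩
  have hb : ∀ i ∈ T, 0 < b i := fun i hi => norm_pos_iff.mpr (hTmem i hi).2.2.2.2
  have hbnn : ∀ i, 0 ≤ b i := fun i => norm_nonneg _
  have hd1 : 1 ≤ d := le_trans (hTmem _ hTne.choose_spec).1 (hTmem _ hTne.choose_spec).2.1
  -- the g function
  set g : ℝ → ℕ × ℕ → ℝ :=
    fun t i => (t / b i) ^ ((1:ℝ) / ((i.1 : ℝ) + (i.2 : ℝ))) with hgdef
  have hexp : ∀ i : ℕ × ℕ, (1:ℝ) / ((i.1 : ℝ) + (i.2 : ℝ)) = ((i.1 + i.2 : ℕ) : ℝ)⁻¹ := by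
    intro i; rw [one_div]; push_cast; ring_nf
  have hnne : ∀ i ∈ T, i.1 + i.2 ≠ 0 := fun i hi => by
    have := (hTmem i hi).1; omega
  -- muf as a min'
  have hset : ∀ t : ℝ, {x : ℝ | ∃ j k : ℕ, 1 ≤ j ∧ 1 ≤ k ∧ Ajk p j k z ≠ 0 ∧
      x = (t / ‖Ajk p j k z‖) ^ ((1:ℝ) / ((j : ℝ) + (k : ℝ)))} = ↑(T.image (g t)) := by
    intro t
    ext x
    simp only [Set.mem_setOf_eq, Finset.coe_image, Set.mem_image, Finset.mem_coe]
    constructor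
    · rintro ⟨j, k, hj, hk, hA, rfl⟩
      have hjd : j ≤ d := by by_contra h; exact hA (hvan j k (Or.inl (not_le.mp h)))
      have hkd : k ≤ d := by by_contra h; exact hA (hvan j k (Or.inr (not_le.mp h)))
      refine ⟨(j, k), ?_, rfl⟩
      rw [hTdef, Finset.mem_filter, hPdef, Finset.mem_product, Finset.mem_Icc, Finset.mem_Icc]
      exact ⟨⟨⟨hj, hjd⟩, ⟨hk, hkd⟩⟩, hA⟩
    · rintro ⟨i, hi, rfl⟩
      obtain ⟨h1, _, h2, _, hA⟩ := hTmem i hi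
      exact ⟨i.1, i.2, h1, h2, hA, rfl⟩
  have hmu : ∀ t : ℝ, muf p z t = (T.image (g t)).min' (hTne.image _) := by
    intro t
    rw [muf, hset t, Finset.Nonempty.csInf_eq_min']
  -- key algebra: b i * (g t i)^(i.1+i.2) = t for t > 0
  have hginv : ∀ t : ℝ, 0 < t → ∀ i ∈ T, b i * (g t i) ^ (i.1 + i.2) = t := by
    intro t ht i hi
    rw [hgdef]
    simp only
    rw [hexp i, Real.rpow_inv_natCast_pow (le_of_lt (div_pos ht (hb i hi))) (hnne i hi)]
    rw [mul_comm]
    exact div_mul_cancel₀ t (ne_of_gt (hb i hi))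
  have hgpos : ∀ t : ℝ, 0 < t → ∀ i ∈ T, 0 < g t i := by
    intro t ht i hi
    exact Real.rpow_pos_of_pos (div_pos ht (hb i hi)) _
  -- Lam as a product sum
  have hLam : ∀ r : ℝ, Lam p d z r = ∑ i ∈ P, b i * r ^ (i.1 + i.2) := by
    intro r; rw [Lam, hPdef, Finset.sum_product]
  have hcardP : (P.card : ℝ) ≤ ((d:ℝ)+1)^2 := by
    rw [hPdef, Finset.card_product, Nat.card_Icc]
    push_cast
    nlinarith [Nat.cast_nonneg (α := ℝ) d]
  constructor
  · -- Part A : Λ(μ(δ))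
    set μ := muf p z δ with hμdef
    have hmem : μ ∈ T.image (g δ) := by rw [hμdef, hmu]; exact Finset.min'_mem _ _
    obtain ⟨i₀, hi₀T, hi₀⟩ := Finset.mem_image.mp hmem
    have hμpos : 0 < μ := hi₀ ▸ hgpos δ hδ i₀ hi₀T
    have hle : ∀ i ∈ T, μ ≤ g δ i := by
      intro i hi
      rw [hμdef, hmu]
      exact Finset.min'_le _ _ (Finset.mem_image_of_mem _ hi)
    constructor
    · rw [one_mul, hLam]
      have : b i₀ * μ ^ (i₀.1 + i₀.2) = δ := by rw [← hi₀]; exact hginv δ hδ i₀ hi₀T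
      calc δ = b i₀ * μ ^ (i₀.1 + i₀.2) := this.symm
        _ ≤ ∑ i ∈ P, b i * μ ^ (i.1 + i.2) := by
            apply Finset.single_le_sum (f := fun i : ℕ × ℕ => b i * μ ^ (i.1 + i.2))
            · intro i _; positivity
            · exact hTsub hi₀T
    · rw [hLam]
      have hterm : ∀ i ∈ P, b i * μ ^ (i.1 + i.2) ≤ δ := by
        intro i hiP
        by_cases hA : Ajk p i.1 i.2 z = 0
        · have : b i = 0 := by rw [hbdef]; simp [hA]
          rw [this, zero_mul]; exact le_of_lt hδ
        · have hiT : i ∈ T := by rw [hTdef, Finset.mem_filter]; exact ⟨hiP, hA⟩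
          have h1 : μ ^ (i.1 + i.2) ≤ (g δ i) ^ (i.1 + i.2) :=
            pow_le_pow_left₀ (le_of_lt hμpos) (hle i hiT) _
          calc b i * μ ^ (i.1 + i.2) ≤ b i * (g δ i) ^ (i.1 + i.2) := by
                exact mul_le_mul_of_nonneg_left h1 (hbnn i)
            _ = δ := hginv δ hδ i hiT
      calc ∑ i ∈ P, b i * μ ^ (i.1 + i.2) ≤ P.card • δ := Finset.sum_le_card_nsmul _ _ _ hterm
        _ = (P.card : ℝ) * δ := by rw [nsmul_eq_mul]
        _ ≤ ((d:ℝ)+1)^2 * δ := mul_le_mul_of_nonneg_right hcardP (le_of_lt hδ)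
  · -- Part B : μ(Λ(δ))
    set Λ := Lam p d z δ with hΛdef
    have hsingle : ∀ i ∈ T, b i * δ ^ (i.1 + i.2) ≤ Λ := by
      intro i hi
      rw [hΛdef, hLam]
      apply Finset.single_le_sum (f := fun i : ℕ × ℕ => b i * δ ^ (i.1 + i.2))
      · intro i _; positivity
      · exact hTsub hi
    have hΛpos : 0 < Λ := by
      obtain ⟨i₁, hi₁⟩ := hTne
      calc (0:ℝ) < b i₁ * δ ^ (i₁.1 + i₁.2) := by
            have := hb i₁ hi₁; positivity
        _ ≤ Λ := hsingle i₁ hi₁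
    constructor
    · rw [one_mul, hmu]
      apply Finset.le_min'
      intro y hy
      obtain ⟨i, hiT, rfl⟩ := Finset.mem_image.mp hy
      have h1 : δ ^ (i.1 + i.2) ≤ Λ / b i :=
        (le_div_iff₀ (hb i hiT)).mpr (by rw [mul_comm]; exact hsingle i hiT)
      have h2 : (δ ^ (i.1 + i.2) : ℝ) ^ ((1:ℝ) / ((i.1:ℝ) + (i.2:ℝ))) ≤ g Λ i := by
        rw [hgdef]
        exact Real.rpow_le_rpow (by positivity) h1 (by positivity)
      have h3 : (δ ^ (i.1 + i.2) : ℝ) ^ ((1:ℝ) / ((i.1:ℝ) + (i.2:ℝ))) = δ := by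
        rw [hexp i, Real.pow_rpow_inv_natCast (le_of_lt hδ) (hnne i hiT)]
      rw [← h3]; exact h2
    · obtain ⟨i₂, hi₂T, hmax⟩ := T.exists_max_image (fun i => b i * δ ^ (i.1 + i.2)) hTne
      have hterm : ∀ i ∈ P, b i * δ ^ (i.1 + i.2) ≤ b i₂ * δ ^ (i₂.1 + i₂.2) := by
        intro i hiP
        by_cases hA : Ajk p i.1 i.2 z = 0
        · have : b i = 0 := by rw [hbdef]; simp [hA]
          rw [this, zero_mul]
          have := hb i₂ hi₂T; positivity
        · exact hmax i (by rw [hTdef, Finset.mem_filter]; exact ⟨hiP, hA⟩)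
      set D : ℝ := ((d:ℝ)+1)^2 with hDdef
      have hD1 : (1:ℝ) ≤ D := by rw [hDdef]; nlinarith [Nat.cast_nonneg (α := ℝ) d]
      have hΛle : Λ ≤ D * (b i₂ * δ ^ (i₂.1 + i₂.2)) := by
        rw [hΛdef, hLam]
        calc ∑ i ∈ P, b i * δ ^ (i.1 + i.2) ≤ P.card • (b i₂ * δ ^ (i₂.1 + i₂.2)) :=
              Finset.sum_le_card_nsmul _ _ _ hterm
          _ = (P.card : ℝ) * (b i₂ * δ ^ (i₂.1 + i₂.2)) := by rw [nsmul_eq_mul]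
          _ ≤ D * (b i₂ * δ ^ (i₂.1 + i₂.2)) := by
              apply mul_le_mul_of_nonneg_right hcardP
              have := hb i₂ hi₂T; positivity
      have hgle : g Λ i₂ ≤ D * δ := by
        have hΛb : Λ / b i₂ ≤ D * δ ^ (i₂.1 + i₂.2) :=
          (div_le_iff₀ (hb i₂ hi₂T)).mpr (le_trans hΛle (le_of_eq (by ring)))
        have h1 : g Λ i₂ ≤ (D * δ ^ (i₂.1 + i₂.2)) ^ ((1:ℝ) / ((i₂.1:ℝ) + (i₂.2:ℝ))) := by
          rw [hgdef]
          exact Real.rpow_le_rpow (by positivity) hΛb (by positivity)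
        have h2 : (D * δ ^ (i₂.1 + i₂.2)) ^ ((1:ℝ) / ((i₂.1:ℝ) + (i₂.2:ℝ))) =
            D ^ ((1:ℝ) / ((i₂.1:ℝ) + (i₂.2:ℝ))) * δ := by
          rw [Real.mul_rpow (by positivity) (by positivity)]
          congr 1
          rw [hexp i₂, Real.pow_rpow_inv_natCast (le_of_lt hδ) (hnne i₂ hi₂T)]
        have h3 : D ^ ((1:ℝ) / ((i₂.1:ℝ) + (i₂.2:ℝ))) ≤ D := by
          nth_rewrite 2 [← Real.rpow_one D]
          apply Real.rpow_le_rpow_of_exponent_le hD1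
          have h1' := (hTmem i₂ hi₂T).1
          have h2' := (hTmem i₂ hi₂T).2.2.1
          have : (1:ℝ) ≤ (i₂.1:ℝ) + (i₂.2:ℝ) := by
            have : (1:ℝ) ≤ (i₂.1:ℝ) := by exact_mod_cast h1'
            have h0 : (0:ℝ) ≤ (i₂.2:ℝ) := Nat.cast_nonneg _
            linarith
          rw [div_le_one (by linarith)]; exact this
        calc g Λ i₂ ≤ D ^ ((1:ℝ) / ((i₂.1:ℝ) + (i₂.2:ℝ))) * δ := h2 ▸ h1
          _ ≤ D * δ := mul_le_mul_of_nonneg_right h3 (le_of_lt hδ)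
      rw [hmu]
      exact le_trans (Finset.min'_le _ _ (Finset.mem_image_of_mem _ hi₂T)) hgle

/-- For a subharmonic nonharmonic polynomial `p` of degree at most `d`, `μ(z,·)` is an
approximate inverse of `Λ(z,·)`: `c δ ≤ Λ(z, μ(z,δ)) ≤ C δ` and
`c δ ≤ μ(z, Λ(z,δ)) ≤ C δ`, with `c, C` depending only on `d`. -/
theorem stmt8 (d : ℕ) : ∃ c C : ℝ, 0 < c ∧ 0 < C ∧
    ∀ (p : ℂ → ℝ) (a : ℕ → ℕ → ℂ),
    (∀ w : ℂ, ((p w : ℂ)) = ∑ j ∈ Finset.range (d+1), ∑ k ∈ Finset.range (d+1),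
        a j k * w ^ j * (starRingEnd ℂ w) ^ k) →
    (∀ z, 0 ≤ lapR p z) → (¬ ∀ z, lapR p z = 0) →
    ∀ z : ℂ, (∃ j k : ℕ, 1 ≤ j ∧ 1 ≤ k ∧ Ajk p j k z ≠ 0) →
    ∀ δ : ℝ, 0 < δ →
      (c * δ ≤ Lam p d z (muf p z δ) ∧ Lam p d z (muf p z δ) ≤ C * δ) ∧
      (c * δ ≤ muf p z (Lam p d z δ) ∧ muf p z (Lam p d z δ) ≤ C * δ) := by
  exact ⟨1, ((d:ℝ)+1)^2, one_pos, by positivity,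
    fun p a hp _ _ z hz δ hδ => stmt8' d p a hp z hz δ hδ⟩
end

section
/- Let m ≥ 1 and define μ₁(z) = inf over j,k ≥ 1 with j+k ≤ 2m of |1/A_{jk}(z)|^{1/(j+k)} for p₁(z) = |z|^{2m}, where A_{jk}(z) = (1/(j!k!)) ∂^{j+k}p₁/∂z^j∂z̄^k(z). Then μ₁(z) ∼ min{1, |z|^{-(m-1)}}, i.e., there are constants c, C > 0 depending only on m with c·min{1,|z|^{1-m}} ≤ μ₁(z) ≤ C·min{1,|z|^{1-m}} for all z ∈ ℂ. -/
/-! Write `M = max 1 |z|^{m-1}`. Every binomial coefficient is at most `2^m` and, for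
`j, k ≥ 1`, `(m - j) + (m - k) ≤ (j + k)(m - 1)`, so `|A_{jk}(z)| ≤ (2^m M)^{j+k}`, which makes
every term of the infimum at least `(2^m M)⁻¹`. Conversely `A_{mm} = 1` gives `μ₁ ≤ 1`, and
`|A_{11}(z)| = m² |z|^{2(m-1)}` gives `μ₁(z) ≤ |z|^{-(m-1)}`. -/

/-- The coefficients `A_{jk}(z) = binom(m,j) binom(m,k) z^{m-j} z̄^{m-k}` of
`p₁(z) = |z|^{2m} = z^m z̄^m`. -/
noncomputable def A1 (m j k : ℕ) (z : ℂ) : ℂ :=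
  (Nat.choose m j : ℂ) * (Nat.choose m k : ℂ) * z ^ (m - j) * (starRingEnd ℂ z) ^ (m - k)

/-- `μ₁(z) = inf_{j,k ≥ 1, j+k ≤ 2m} |1/A_{jk}(z)|^{1/(j+k)}` (over nonvanishing
coefficients, which all have `j,k ≤ m`). -/
noncomputable def mu1 (m : ℕ) (z : ℂ) : ℝ :=
  sInf {x : ℝ | ∃ j k : ℕ, 1 ≤ j ∧ j ≤ m ∧ 1 ≤ k ∧ k ≤ m ∧ A1 m j k z ≠ 0 ∧
    x = (1 / ‖A1 m j k z‖) ^ ((1:ℝ) / ((j : ℝ) + (k : ℝ)))}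

lemma inv_le_one_div_rpow_iff {a K : ℝ} (ha : 0 < a) (hK : 0 < K) {n : ℕ} (hn : n ≠ 0) :
    K⁻¹ ≤ (1 / a) ^ ((1 : ℝ) / n) ↔ a ≤ K ^ n := by
  rw [one_div (n : ℝ), Real.le_rpow_inv_iff_of_pos (by positivity) (by positivity)
    (by positivity), Real.rpow_natCast, inv_pow, one_div, inv_le_inv₀ (by positivity) ha]

lemma one_div_rpow_le_inv_iff {a K : ℝ} (ha : 0 < a) (hK : 0 < K) {n : ℕ} (hn : n ≠ 0) :
    (1 / a) ^ ((1 : ℝ) / n) ≤ K⁻¹ ↔ K ^ n ≤ a := by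
  rw [one_div (n : ℝ), Real.rpow_inv_le_iff_of_pos (by positivity) (by positivity)
    (by positivity), Real.rpow_natCast, inv_pow, one_div, inv_le_inv₀ ha (by positivity)]

lemma pow_le_max_one_pow_pow {r : ℝ} (hr : 0 ≤ r) {p n q : ℕ} (h : p ≤ q * n) :
    r ^ p ≤ max 1 (r ^ n) ^ q := by
  rcases le_total r 1 with hr1 | hr1
  · calc r ^ p ≤ 1 := pow_le_one₀ hr hr1
      _ ≤ max 1 (r ^ n) ^ q := one_le_pow₀ (le_max_left _ _)
  · calc r ^ p ≤ r ^ (n * q) := pow_le_pow_right₀ hr1 (by rwa [mul_comm])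
      _ = (r ^ n) ^ q := pow_mul r n q
      _ ≤ max 1 (r ^ n) ^ q := pow_le_pow_left₀ (by positivity) (le_max_right _ _) q

section Coefficients

variable {m j k : ℕ} {z : ℂ}

lemma norm_A1 : ‖A1 m j k z‖ =
    (m.choose j : ℝ) * (m.choose k : ℝ) * ‖z‖ ^ (m - j) * ‖z‖ ^ (m - k) := by
  simp [A1, norm_pow]

lemma A1_self : A1 m m m z = 1 := by
  simp [A1]

lemma A1_one_one_ne_zero (hm : 1 ≤ m) (hz : z ≠ 0) : A1 m 1 1 z ≠ 0 := by
  simp [A1, hz, Nat.one_le_iff_ne_zero.mp hm]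

lemma norm_A1_le_pow (hj : 1 ≤ j) (hk : 1 ≤ k) :
    ‖A1 m j k z‖ ≤ (2 ^ m * max 1 (‖z‖ ^ (m - 1))) ^ (j + k) := by
  have hchoose : (m.choose j : ℝ) * m.choose k ≤ (2 ^ m) ^ (j + k) :=
    calc (m.choose j : ℝ) * m.choose k ≤ 2 ^ m * 2 ^ m := by
          gcongr <;> exact_mod_cast Nat.choose_le_two_pow _ _
      _ = (2 ^ m) ^ 2 := (sq _).symm
      _ ≤ (2 ^ m) ^ (j + k) := pow_le_pow_right₀ (one_le_pow₀ one_le_two) (by omega)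
  have hexp : (m - j) + (m - k) ≤ (j + k) * (m - 1) :=
    calc (m - j) + (m - k) ≤ 2 * (m - 1) := by omega
      _ ≤ (j + k) * (m - 1) := Nat.mul_le_mul_right _ (by omega)
  calc ‖A1 m j k z‖ = ((m.choose j : ℝ) * m.choose k) * ‖z‖ ^ ((m - j) + (m - k)) := by
        rw [norm_A1, pow_add]; ring
    _ ≤ (2 ^ m) ^ (j + k) * max 1 (‖z‖ ^ (m - 1)) ^ (j + k) := by
        gcongr
        exact pow_le_max_one_pow_pow (norm_nonneg z) hexp
    _ = _ := (mul_pow _ _ _).symm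

end Coefficients

section SizeFunction

variable {m : ℕ} {z : ℂ}

lemma mu1_le {j k : ℕ} (hj : 1 ≤ j) (hjm : j ≤ m) (hk : 1 ≤ k) (hkm : k ≤ m)
    (hA : A1 m j k z ≠ 0) : mu1 m z ≤ (1 / ‖A1 m j k z‖) ^ ((1 : ℝ) / ((j + k : ℕ) : ℝ)) := by
  refine csInf_le ⟨0, ?_⟩ ⟨j, k, hj, hjm, hk, hkm, hA, by push_cast; rfl⟩
  rintro _ ⟨j, k, -, -, -, -, -, rfl⟩
  positivity

lemma le_mu1 (hm : 1 ≤ m) {c : ℝ}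
    (h : ∀ j k, 1 ≤ j → 1 ≤ k → A1 m j k z ≠ 0 →
      c ≤ (1 / ‖A1 m j k z‖) ^ ((1 : ℝ) / ((j + k : ℕ) : ℝ))) :
    c ≤ mu1 m z := by
  refine le_csInf ⟨1, m, m, hm, le_rfl, hm, le_rfl, by simp [A1_self]⟩ ?_
  rintro _ ⟨j, k, hj, -, hk, -, hA, rfl⟩
  exact_mod_cast h j k hj hk hA

lemma inv_le_mu1 (hm : 1 ≤ m) : (2 ^ m * max 1 (‖z‖ ^ (m - 1)))⁻¹ ≤ mu1 m z :=
  le_mu1 hm fun _ _ hj hk hA =>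
    (inv_le_one_div_rpow_iff (norm_pos_iff.2 hA) (by positivity) (by omega)).2
      (norm_A1_le_pow hj hk)

lemma mu1_le_one (hm : 1 ≤ m) : mu1 m z ≤ 1 := by
  simpa [A1_self] using mu1_le hm le_rfl hm le_rfl (by simp [A1_self] : A1 m m m z ≠ 0)

lemma mu1_le_inv_norm_pow (hm : 1 ≤ m) (hz : z ≠ 0) : mu1 m z ≤ (‖z‖ ^ (m - 1))⁻¹ := by
  have hA := A1_one_one_ne_zero hm hz
  refine (mu1_le le_rfl hm le_rfl hm hA).trans
    ((one_div_rpow_le_inv_iff (norm_pos_iff.2 hA) (by positivity) two_ne_zero).2 ?_)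
  have hm' : (1 : ℝ) ≤ m * m := one_le_mul_of_one_le_of_one_le (by exact_mod_cast hm)
    (by exact_mod_cast hm)
  calc (‖z‖ ^ (m - 1)) ^ 2 = 1 * (‖z‖ ^ (m - 1) * ‖z‖ ^ (m - 1)) := by ring
    _ ≤ (m * m) * (‖z‖ ^ (m - 1) * ‖z‖ ^ (m - 1)) := by gcongr
    _ = ‖A1 m 1 1 z‖ := by rw [norm_A1, Nat.choose_one_right]; ring

lemma mu1_le_inv_max (hm : 1 ≤ m) : mu1 m z ≤ (max 1 (‖z‖ ^ (m - 1)))⁻¹ := by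
  rcases le_or_gt ‖z‖ 1 with hz | hz
  · rw [max_eq_left (pow_le_one₀ (norm_nonneg z) hz), inv_one]
    exact mu1_le_one hm
  · rw [max_eq_right (one_le_pow₀ hz.le)]
    exact mu1_le_inv_norm_pow hm (norm_pos_iff.1 (one_pos.trans hz))

end SizeFunction

/-- For `p₁(z) = |z|^{2m}`, `μ₁(z) ∼ min{1, |z|^{-(m-1)}} = (max{1,|z|^{m-1}})⁻¹`. -/
theorem stmt14 (m : ℕ) (hm : 1 ≤ m) : ∃ c C : ℝ, 0 < c ∧ 0 < C ∧ ∀ z : ℂ,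
    c * (max 1 (‖z‖ ^ (m - 1)))⁻¹ ≤ mu1 m z ∧ mu1 m z ≤ C * (max 1 (‖z‖ ^ (m - 1)))⁻¹ := by
  refine ⟨(2 ^ m)⁻¹, 1, by positivity, one_pos, fun z => ⟨?_, ?_⟩⟩
  · rw [← mul_inv]
    exact inv_le_mu1 hm
  · rw [one_mul]
    exact mu1_le_inv_max hm
end

section
/- Let m ≥ 1 and for z, ζ ∈ ℂ define γ(z,ζ) = inf over C¹ paths α : [0,1] → ℂ with α(0) = z, α(1) = ζ of ∫_0^1 |α(t)|^{m-1} |α'(t)| dt. Then γ(z,ζ) ≥ (1/m)|z^m − ζ^m|. -/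
open MeasureTheory

/-- For every `C¹` path `α` from `z` to `ζ`, the weighted length
`∫_0^1 |α|^{m-1} |α'| dt` is at least `(1/m)|z^m − ζ^m|`; hence
`γ(z,ζ) ≥ (1/m)|z^m − ζ^m|`. -/
theorem stmt16 (m : ℕ) (hm : 1 ≤ m) (z ζ : ℂ) (α α' : ℝ → ℂ)
    (hd : ∀ t ∈ Set.Icc (0:ℝ) 1, HasDerivAt α (α' t) t)
    (hc : ContinuousOn α' (Set.Icc 0 1))
    (h0 : α 0 = z) (h1 : α 1 = ζ) :
    (1 / (m : ℝ)) * ‖z ^ m - ζ ^ m‖ ≤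
      ∫ t in Set.Icc (0:ℝ) 1, ‖α t‖ ^ (m - 1) * ‖α' t‖ := by
  have huIcc : Set.uIcc (0:ℝ) 1 = Set.Icc 0 1 := Set.uIcc_of_le zero_le_one
  set β' : ℝ → ℂ := fun t => (m : ℂ) * α t ^ (m - 1) * α' t with hβ'
  have hcα : ContinuousOn α (Set.Icc 0 1) := fun t ht =>
    (hd t ht).continuousAt.continuousWithinAt
  have hdβ : ∀ t ∈ Set.uIcc (0:ℝ) 1, HasDerivAt (fun t => α t ^ m) (β' t) t := by
    intro t ht
    rw [huIcc] at ht
    simpa [hβ', mul_assoc, Function.comp_def] using (hasDerivAt_pow m (α t)).comp t (hd t ht)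
  have hcβ' : ContinuousOn β' (Set.Icc 0 1) :=
    (continuousOn_const.mul ((hcα.pow _))).mul hc
  have hInt : IntervalIntegrable β' volume 0 1 := by
    rw [intervalIntegrable_iff_integrableOn_Icc_of_le zero_le_one]
    exact hcβ'.integrableOn_Icc
  have hFTC : ∫ t in (0:ℝ)..1, β' t = ζ ^ m - z ^ m := by
    rw [intervalIntegral.integral_eq_sub_of_hasDerivAt hdβ hInt, h0, h1]
  have hnorm : ‖ζ ^ m - z ^ m‖ ≤ ∫ t in (0:ℝ)..1, ‖β' t‖ := by
    rw [← hFTC]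
    exact intervalIntegral.norm_integral_le_integral_norm zero_le_one
  have hkey : ∀ t, ‖β' t‖ = (m : ℝ) * (‖α t‖ ^ (m - 1) * ‖α' t‖) := by
    intro t
    simp [hβ', norm_mul, norm_pow, mul_assoc]
  have hInt2 : IntervalIntegrable (fun t => ‖α t‖ ^ (m - 1) * ‖α' t‖) volume 0 1 := by
    rw [intervalIntegrable_iff_integrableOn_Icc_of_le zero_le_one]
    exact (((hcα.norm).pow _).mul hc.norm).integrableOn_Icc
  have heq : ∫ t in (0:ℝ)..1, ‖β' t‖
      = (m : ℝ) * ∫ t in (0:ℝ)..1, ‖α t‖ ^ (m - 1) * ‖α' t‖ := by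
    simp_rw [hkey]
    exact intervalIntegral.integral_const_mul _ _
  have hm' : (0:ℝ) < m := by exact_mod_cast Nat.cast_pos.mpr hm
  have hivi : ∫ t in Set.Icc (0:ℝ) 1, ‖α t‖ ^ (m - 1) * ‖α' t‖
      = ∫ t in (0:ℝ)..1, ‖α t‖ ^ (m - 1) * ‖α' t‖ := by
    rw [intervalIntegral.integral_of_le zero_le_one, integral_Icc_eq_integral_Ioc]
  rw [hivi, div_mul_eq_mul_div, one_mul, div_le_iff₀ hm', mul_comm]
  rw [norm_sub_rev]
  calc ‖ζ ^ m - z ^ m‖ ≤ ∫ t in (0:ℝ)..1, ‖β' t‖ := hnorm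
    _ = _ := heq
end
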